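/- arXiv:1208.6195 — 2 statements merged into one kernel-verified Lean document; each statement's English description precedes it below -/
import Mathlib

section
/- For every positive integer m and every real β with 1 < β ≤ ω_m, the (2m+1)-th iterate of T_{0,β}(x) = βx satisfies T_{0,β}^{2m+1}(β/(β²-1)) = β^{2m+2}/(β²-1), and moreover β^{2m+2}/(β²-1) ≤ 1/(β-1), i.e. this point lies in [0, 1/(β-1)]. -/
/-!
The identity is just `T₀^[n] x = βⁿ x`. Since `β² - 1 = (β - 1)(β + 1)`, the inequality is
equivalent to `β^(2m+2) ≤ β + 1`, which follows from `β^(2m+3) ≤ β + 1`. The latter holds for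
`1 < β ≤ ω₃` because `P³_m(1) = -1 < 0` and, by the intermediate value theorem, `P³_m` cannot
become positive on `(1, ω₃]` without vanishing before its smallest root `ω₃`.
-/

/-- `r` is the smallest real root greater than 1 of `P`. -/
def IsSmallestRootGT1 (P : ℝ → ℝ) (r : ℝ) : Prop :=
  1 < r ∧ P r = 0 ∧ ∀ y : ℝ, 1 < y → P y = 0 → r ≤ y

theorem IsSmallestRootGT1.nonpos_of_le {P : ℝ → ℝ} {r β : ℝ} (hr : IsSmallestRootGT1 P r)
    (hP : Continuous P) (hP₁ : P 1 < 0) (hβ : 1 ≤ β) (hβr : β ≤ r) : P β ≤ 0 := by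
  by_contra! hPβ
  obtain ⟨c, ⟨hc₁, hcβ⟩, hPc⟩ :=
    intermediate_value_Ioo hβ hP.continuousOn (show (0 : ℝ) ∈ Set.Ioo (P 1) (P β) from ⟨hP₁, hPβ⟩)
  linarith [hr.2.2 c hc₁ hPc]

theorem pow_le_add_one_of_le_smallestRoot {n : ℕ} {ω β : ℝ}
    (hω : IsSmallestRootGT1 (fun y => y ^ (n + 1) - y - 1) ω) (hβ : 1 ≤ β) (hβω : β ≤ ω) :
    β ^ n ≤ β + 1 := by
  have h : β ^ (n + 1) - β - 1 ≤ 0 :=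
    hω.nonpos_of_le (P := fun y => y ^ (n + 1) - y - 1) (by fun_prop) (by norm_num) hβ hβω
  linarith [pow_le_pow_right₀ hβ (n.le_add_right 1)]

theorem pow_div_sq_sub_one_le_one_div_sub_one {n : ℕ} {β : ℝ} (hβ : 1 < β)
    (h : β ^ n ≤ β + 1) : β ^ n / (β ^ 2 - 1) ≤ 1 / (β - 1) := by
  rw [div_le_div_iff₀ (by nlinarith) (by linarith)]
  nlinarith

theorem iterate_T0_mem_of_le_omega_general (m : ℕ) (ω₁ ω₂ ω₃ : ℝ)
    (h₃ : IsSmallestRootGT1 (fun y => y ^ (2 * m + 3) - y - 1) ω₃)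
    (β : ℝ) (hβ : 1 < β) (hβω : β ≤ min ω₁ (min ω₂ ω₃)) :
    (fun y : ℝ => β * y)^[2 * m + 1] (β / (β ^ 2 - 1)) = β ^ (2 * m + 2) / (β ^ 2 - 1) ∧
      β ^ (2 * m + 2) / (β ^ 2 - 1) ≤ 1 / (β - 1) := by
  refine ⟨?_, pow_div_sq_sub_one_le_one_div_sub_one hβ ?_⟩
  · rw [mul_left_iterate_apply, mul_div_assoc', ← pow_succ]
  · exact pow_le_add_one_of_le_smallestRoot h₃ hβ.le
      (hβω.trans ((min_le_right _ _).trans (min_le_right _ _)))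

theorem iterate_T0_mem_of_le_omega (m : ℕ) (hm : 0 < m) (ω₁ ω₂ ω₃ : ℝ)
    (h₁ : IsSmallestRootGT1
      (fun y => y ^ (4 * m + 3) - y ^ (2 * m + 2) - y ^ (m + 2) - y ^ (m + 1) + y + 1) ω₁)
    (h₂ : IsSmallestRootGT1 (fun y => y ^ (2 * m + 3) - y ^ (2 * m + 2) - y ^ 2 + 1) ω₂)
    (h₃ : IsSmallestRootGT1 (fun y => y ^ (2 * m + 3) - y - 1) ω₃)
    (β : ℝ) (hβ : 1 < β) (hβω : β ≤ min ω₁ (min ω₂ ω₃)) :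
    (fun y : ℝ => β * y)^[2 * m + 1] (β / (β ^ 2 - 1)) = β ^ (2 * m + 2) / (β ^ 2 - 1) ∧
      β ^ (2 * m + 2) / (β ^ 2 - 1) ≤ 1 / (β - 1) :=
  iterate_T0_mem_of_le_omega_general m ω₁ ω₂ ω₃ h₃ β hβ hβω
end

section
/- Let m ≥ 2 be an integer and let β ∈ (2^{1/m}, 2). Then for every x ∈ (0, 1/(β-1)), limsup_{k→∞} (log₂ N_k(x,β))/k ≤ (log₂(2^m - 1))/m. -/
/-- The set `Σ_β(x)` of β-expansions of `x`: sequences `(ε_n)_{n ≥ 1}` of zeros and ones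
with `Σ_{n=1}^∞ ε_n / β^n = x` (here indexed from 0, so digit `n` has weight `β^{-(n+1)}`). -/
def betaExpansions (β x : ℝ) : Set (ℕ → Bool) :=
  {ε | ∑' n : ℕ, (if ε n then (1 : ℝ) else 0) / β ^ (n + 1) = x}

/-- `E_k(x,β)`: the set of words of length `k` extendable to a β-expansion of `x`. -/
def prefixSet (β x : ℝ) (k : ℕ) : Set (Fin k → Bool) :=
  {w | ∃ ε ∈ betaExpansions β x, ∀ i : Fin k, ε i = w i}

/-- `N_k(x,β)`: the number of `k`-prefixes of β-expansions of `x`. -/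
noncomputable def Nk (β x : ℝ) (k : ℕ) : ℕ := (prefixSet β x k).ncard

/-!
If `β ^ m > 2`, two β-expansions of `x` cannot share a prefix of length `k` and continue it, one
with `m` zeros and the other with `m` ones: shifted by `k` they have equal values, but the first
is at most `β⁻ᵐ/(β-1)` and the second at least `(1-β⁻ᵐ)/(β-1)`. So each word in `E_k` has at most
`2^m - 1` extensions in `E_{k+m}`, i.e. `N_{k+m} ≤ (2^m - 1) N_k`, and iterating gives
`N_k ≤ (2^m - 1)^⌊k/m⌋ 2^m`.
-/

open Filter Finset

noncomputable def betaValue (β : ℝ) (ε : ℕ → Bool) : ℝ :=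
  ∑' n : ℕ, (if ε n then (1 : ℝ) else 0) / β ^ (n + 1)

theorem mem_betaExpansions_iff {β x : ℝ} {ε : ℕ → Bool} :
    ε ∈ betaExpansions β x ↔ betaValue β ε = x :=
  Iff.rfl

section BetaValue

variable {β : ℝ}

theorem summable_betaValue (hβ : 1 < β) (ε : ℕ → Bool) :
    Summable fun n => (if ε n then (1 : ℝ) else 0) / β ^ (n + 1) := by
  have hβ₀ : 0 < β := one_pos.trans hβ
  refine (summable_geometric_of_lt_one (inv_nonneg.2 hβ₀.le)
    (inv_lt_one_of_one_lt₀ hβ)).of_nonneg_of_le (fun n => by positivity) fun n => ?_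
  rw [inv_pow, ← one_div]
  split_ifs
  · exact one_div_le_one_div_of_le (by positivity) (pow_le_pow_right₀ hβ.le n.le_succ)
  · rw [zero_div]; positivity

theorem betaValue_const_true (hβ : 1 < β) : betaValue β (fun _ => true) = (β - 1)⁻¹ := by
  have hβ₀ : β ≠ 0 := (one_pos.trans hβ).ne'
  simp only [betaValue, if_true, pow_succ, one_div, mul_inv, ← inv_pow]
  rw [tsum_mul_right, tsum_geometric_of_lt_one (inv_nonneg.2 (one_pos.trans hβ).le)
    (inv_lt_one_of_one_lt₀ hβ)]
  field_simp

theorem betaValue_add_betaValue_not (hβ : 1 < β) (ε : ℕ → Bool) :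
    betaValue β ε + betaValue β (fun n => !ε n) = (β - 1)⁻¹ := by
  rw [betaValue, betaValue, ← (summable_betaValue hβ ε).tsum_add (summable_betaValue hβ _),
    ← betaValue_const_true hβ, betaValue]
  refine tsum_congr fun n => ?_
  cases ε n <;> simp

theorem betaValue_nonneg (hβ : 1 < β) (ε : ℕ → Bool) : 0 ≤ betaValue β ε :=
  tsum_nonneg fun n => by have := one_pos.trans hβ; positivity

theorem betaValue_le (hβ : 1 < β) (ε : ℕ → Bool) : betaValue β ε ≤ (β - 1)⁻¹ := by
  linarith [betaValue_add_betaValue_not hβ ε, betaValue_nonneg hβ fun n => !ε n]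

theorem betaValue_eq_sum_add_betaValue_shift (hβ : 1 < β) (ε : ℕ → Bool) (k : ℕ) :
    betaValue β ε = ∑ i ∈ range k, (if ε i then (1 : ℝ) else 0) / β ^ (i + 1) +
      betaValue β (fun n => ε (n + k)) / β ^ k := by
  rw [betaValue, ← (summable_betaValue hβ ε).sum_add_tsum_nat_add k, betaValue, ← tsum_div_const]
  congr 1
  refine tsum_congr fun n => ?_
  rw [div_div, ← pow_add, add_right_comm]

theorem betaValue_le_of_eq_false (hβ : 1 < β) {ε : ℕ → Bool} {m : ℕ} (hε : ∀ j < m, ε j = false) :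
    betaValue β ε ≤ (β - 1)⁻¹ / β ^ m := by
  have hhead : ∑ i ∈ range m, (if ε i then (1 : ℝ) else 0) / β ^ (i + 1) = 0 :=
    sum_eq_zero fun i hi => by simp [hε i (mem_range.1 hi)]
  rw [betaValue_eq_sum_add_betaValue_shift hβ ε m, hhead, zero_add]
  gcongr
  exact betaValue_le hβ _

theorem le_betaValue_of_eq_true (hβ : 1 < β) {ε : ℕ → Bool} {m : ℕ} (hε : ∀ j < m, ε j = true) :
    (β - 1)⁻¹ - (β - 1)⁻¹ / β ^ m ≤ betaValue β ε := by
  have := betaValue_le_of_eq_false hβ (ε := fun n => !ε n) (m := m) fun j hj => by simp [hε j hj]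
  linarith [betaValue_add_betaValue_not hβ ε]

theorem betaValue_shift_eq_of_eq (hβ : 1 < β) {ε₀ ε₁ : ℕ → Bool}
    (h : betaValue β ε₀ = betaValue β ε₁) {k : ℕ} (hagree : ∀ i < k, ε₀ i = ε₁ i) :
    betaValue β (fun n => ε₀ (n + k)) = betaValue β (fun n => ε₁ (n + k)) := by
  have hhead : ∑ i ∈ range k, (if ε₀ i then (1 : ℝ) else 0) / β ^ (i + 1) =
      ∑ i ∈ range k, (if ε₁ i then (1 : ℝ) else 0) / β ^ (i + 1) :=
    sum_congr rfl fun i hi => by rw [hagree i (mem_range.1 hi)]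
  rw [betaValue_eq_sum_add_betaValue_shift hβ ε₀ k, betaValue_eq_sum_add_betaValue_shift hβ ε₁ k,
    hhead, add_right_inj] at h
  exact (div_left_inj' (pow_ne_zero k (one_pos.trans hβ).ne')).1 h

theorem false_of_betaValue_eq_of_zeros_ones (hβ : 1 < β) {m : ℕ} (hβm : 2 < β ^ m)
    {ε₀ ε₁ : ℕ → Bool} (h : betaValue β ε₀ = betaValue β ε₁) {k : ℕ} (hagree : ∀ i < k, ε₀ i = ε₁ i)
    (hzeros : ∀ j < m, ε₀ (j + k) = false) (hones : ∀ j < m, ε₁ (j + k) = true) : False := by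
  have hshift := betaValue_shift_eq_of_eq hβ h hagree
  have hle := betaValue_le_of_eq_false hβ hzeros
  have hge := le_betaValue_of_eq_true hβ hones
  have hc : 0 < (β - 1)⁻¹ := inv_pos.2 (sub_pos.2 hβ)
  have : (β - 1)⁻¹ ≤ 2 * ((β - 1)⁻¹ / β ^ m) := by linarith
  rw [mul_div_assoc', le_div_iff₀ (by positivity)] at this
  nlinarith

end BetaValue

theorem Set.ncard_le_mul_ncard_of_forall_exists_notMem {α γ : Type*} [Finite α] [Fintype γ]
    {S : Set (α × γ)} {T : Set α} (hST : ∀ p ∈ S, p.1 ∈ T) (hmiss : ∀ a, ∃ c, (a, c) ∉ S) :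
    S.ncard ≤ (Fintype.card γ - 1) * T.ncard := by
  classical
  have := Fintype.ofFinite α
  rw [Set.ncard_eq_toFinset_card' S, Set.ncard_eq_toFinset_card' T]
  refine card_le_mul_card_image_of_maps_to (f := Prod.fst) (by simpa using hST) _ fun a _ => ?_
  obtain ⟨c, hc⟩ := hmiss a
  calc #{p ∈ S.toFinset | p.1 = a} ≤ #(Finset.univ.erase c) := by
        refine card_le_card_of_injOn Prod.snd (fun p hp => ?_) fun p hp q hq hpq => ?_
        · simp only [coe_filter, Set.mem_toFinset, Set.mem_ofPred_eq] at hp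
          simp only [coe_erase, coe_univ, Set.mem_sdiff, Set.mem_univ, Set.mem_singleton_iff,
            true_and]
          rintro rfl
          exact hc (hp.2 ▸ hp.1)
        · simp only [coe_filter, Set.mem_toFinset, Set.mem_ofPred_eq] at hp hq
          exact Prod.ext (hp.2.trans hq.2.symm) hpq
    _ = Fintype.card γ - 1 := by rw [card_erase_of_mem (Finset.mem_univ c), card_univ]

theorem Nk_add_le {β x : ℝ} (hβ : 1 < β) {m : ℕ} (hβm : 2 < β ^ m) (k : ℕ) :
    Nk β x (k + m) ≤ (2 ^ m - 1) * Nk β x k := by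
  have hcard : Nk β x (k + m) = (Fin.appendEquiv k m ⁻¹' prefixSet β x (k + m)).ncard :=
    (Set.ncard_preimage_of_injective_subset_range (Fin.appendEquiv k m).injective
      (by simp)).symm
  have hwords : Fintype.card (Fin m → Bool) = 2 ^ m := by simp
  rw [hcard, Nk, ← hwords]
  refine Set.ncard_le_mul_ncard_of_forall_exists_notMem ?_ fun a => ?_
  · rintro ⟨a, b⟩ ⟨ε, hε, hab⟩
    exact ⟨ε, hε, fun i => by simpa using hab (Fin.castAdd m i)⟩
  · by_contra! h
    obtain ⟨ε₀, hε₀, h₀⟩ := h fun _ => false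
    obtain ⟨ε₁, hε₁, h₁⟩ := h fun _ => true
    refine false_of_betaValue_eq_of_zeros_ones hβ hβm
      ((mem_betaExpansions_iff.1 hε₀).trans (mem_betaExpansions_iff.1 hε₁).symm) (k := k)
      (fun i hi => ?_) (fun j hj => ?_) fun j hj => ?_
    · have e₀ := h₀ (Fin.castAdd m ⟨i, hi⟩)
      have e₁ := h₁ (Fin.castAdd m ⟨i, hi⟩)
      simp only [Fin.appendEquiv_apply, Fin.append_left, Fin.val_castAdd] at e₀ e₁
      exact e₀.trans e₁.symm
    · simpa only [Fin.appendEquiv_apply, Fin.append_right, Fin.val_natAdd, add_comm]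
        using h₀ (Fin.natAdd k ⟨j, hj⟩)
    · simpa only [Fin.appendEquiv_apply, Fin.append_right, Fin.val_natAdd, add_comm]
        using h₁ (Fin.natAdd k ⟨j, hj⟩)

theorem Nk_le_two_pow (β x : ℝ) (k : ℕ) : Nk β x k ≤ 2 ^ k := by
  simpa [Nk] using Set.ncard_le_card (prefixSet β x k)

theorem le_pow_div_mul_of_le_mul {u : ℕ → ℕ} {m c B : ℕ} (hm : 0 < m)
    (hstep : ∀ k, u (k + m) ≤ c * u k) (hinit : ∀ k < m, u k ≤ B) (k : ℕ) :
    u k ≤ c ^ (k / m) * B := by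
  have hblock : ∀ q r, r < m → u (m * q + r) ≤ c ^ q * B := by
    intro q r hr
    induction q with
    | zero => simpa using hinit r hr
    | succ q ih =>
      calc u (m * (q + 1) + r) = u (m * q + r + m) := by ring_nf
        _ ≤ c * u (m * q + r) := hstep _
        _ ≤ c * (c ^ q * B) := Nat.mul_le_mul_left c ih
        _ = c ^ (q + 1) * B := by ring
  simpa only [Nat.div_add_mod] using hblock (k / m) (k % m) (Nat.mod_lt k hm)

theorem Real.logb_natCast_nonneg {b : ℝ} (hb : 1 < b) (n : ℕ) : 0 ≤ Real.logb b n :=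
  div_nonneg (Real.log_natCast_nonneg n) (Real.log_nonneg hb.le)

open Real in
theorem limsup_logb_div_le_of_le_mul {b : ℝ} (hb : 1 < b) {u : ℕ → ℕ} {m c B : ℕ} (hm : 0 < m)
    (hc : 1 ≤ c) (hstep : ∀ k, u (k + m) ≤ c * u k) (hinit : ∀ k < m, u k ≤ B) :
    limsup (fun k : ℕ => logb b (u k) / k) atTop ≤ logb b c / m := by
  have hlog : ∀ k : ℕ, logb b (u k) ≤ k / m * logb b c + logb b B := by
    intro k
    have hdiv : ((k / m : ℕ) : ℝ) * logb b c ≤ k / m * logb b c :=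
      mul_le_mul_of_nonneg_right Nat.cast_div_le (logb_natCast_nonneg hb c)
    rcases (u k).eq_zero_or_pos with h0 | hpos
    · rw [h0, Nat.cast_zero, logb_zero]
      have := logb_natCast_nonneg hb c
      have := logb_natCast_nonneg hb B
      positivity
    · have hle := le_pow_div_mul_of_le_mul hm hstep hinit k
      have hB : (B : ℝ) ≠ 0 := by
        have : 0 < c ^ (k / m) * B := hpos.trans_le hle
        exact_mod_cast (Nat.pos_of_mul_pos_left this).ne'
      calc logb b (u k) ≤ logb b ((c : ℝ) ^ (k / m) * B) :=
            logb_le_logb_of_le hb (by exact_mod_cast hpos) (by exact_mod_cast hle)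
        _ = ((k / m : ℕ) : ℝ) * logb b c + logb b B := by
            rw [logb_mul (by positivity) hB, logb_pow]
        _ ≤ k / m * logb b c + logb b B := by linarith
  have hev : ∀ᶠ k : ℕ in atTop, logb b (u k) / k ≤ logb b c / m + logb b B / k := by
    filter_upwards [eventually_gt_atTop 0] with k hk
    calc logb b (u k) / k ≤ (k / m * logb b c + logb b B) / k :=
          div_le_div_of_nonneg_right (hlog k) k.cast_nonneg
      _ = logb b c / m + logb b B / k := by field_simp
  have htend : Tendsto (fun k : ℕ => logb b c / m + logb b B / k) atTop (nhds (logb b c / m)) := by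
    simpa using tendsto_const_nhds.add (tendsto_const_div_atTop_nhds_zero_nat (logb b B))
  calc limsup (fun k : ℕ => logb b (u k) / k) atTop
      ≤ limsup (fun k : ℕ => logb b c / m + logb b B / k) atTop :=
        limsup_le_limsup hev (isCoboundedUnder_le_of_le atTop fun k =>
          div_nonneg (logb_natCast_nonneg hb _) k.cast_nonneg) htend.isBoundedUnder_le
    _ = logb b c / m := htend.limsup_eq

theorem limsup_growth_rate_le_general (m : ℕ) (hm : 2 ≤ m)
    (β : ℝ) (hβ₁ : (2 : ℝ) ^ (1 / (m : ℝ)) < β)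
    (x : ℝ) :
    Filter.limsup (fun k : ℕ => Real.logb 2 (Nk β x k) / k) Filter.atTop ≤
      Real.logb 2 (2 ^ m - 1) / m := by
  have hm₀ : m ≠ 0 := by omega
  have hβ : 1 < β := (Real.one_lt_rpow one_lt_two (by positivity)).trans hβ₁
  have hβm : 2 < β ^ m := by
    calc (2 : ℝ) = ((2 : ℝ) ^ (1 / (m : ℝ))) ^ m := by
          rw [one_div, Real.rpow_inv_natCast_pow zero_le_two hm₀]
      _ < β ^ m := pow_lt_pow_left₀ hβ₁ (by positivity) hm₀
  have hc : 1 ≤ 2 ^ m - 1 := by have := Nat.one_lt_two_pow hm₀; omega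
  have hcast : ((2 ^ m - 1 : ℕ) : ℝ) = 2 ^ m - 1 := by
    rw [Nat.cast_sub Nat.one_le_two_pow]; push_cast; rfl
  rw [← hcast]
  exact limsup_logb_div_le_of_le_mul one_lt_two (Nat.pos_of_ne_zero hm₀) hc (Nk_add_le hβ hβm)
    fun k hk => (Nk_le_two_pow β x k).trans (Nat.pow_le_pow_right two_pos hk.le)

theorem limsup_growth_rate_le (m : ℕ) (hm : 2 ≤ m)
    (β : ℝ) (hβ₁ : (2 : ℝ) ^ (1 / (m : ℝ)) < β) (hβ₂ : β < 2)
    (x : ℝ) (hx : x ∈ Set.Ioo 0 (1 / (β - 1))) :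
    Filter.limsup (fun k : ℕ => Real.logb 2 (Nk β x k) / k) Filter.atTop ≤
      Real.logb 2 (2 ^ m - 1) / m :=
  limsup_growth_rate_le_general m hm β hβ₁ x
end
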